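/- Let U be a unitary on H = (ℂ²)^{⊗n} with Uψ = φ for unit vectors ψ, φ. Then ‖U − I‖₂² ≥ 2(1 − |⟨ψ|φ⟩|) ≥ (1/2)‖|ψ⟩⟨ψ| − |φ⟩⟨φ|‖₂². Combined with d(I,U) ≥ 2^{-n/2}‖U−I‖₂, this gives 2^{(n+1)/2} d_C(ψ,φ) ≥ ‖|ψ⟩⟨ψ| − |φ⟩⟨φ|‖₂ for the complexity distance d_C(ψ,φ) = min{d(I,U) : Uψ = φ}. -/

import Mathlib

open scoped BigOperators ComplexOrder
open Matrix

noncomputable section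

abbrev QV (D : ℕ) := EuclideanSpace ℂ (Fin D)

def qproj {D : ℕ} (ψ : QV D) : Matrix (Fin D) (Fin D) ℂ :=
  Matrix.of fun i j => ψ i * (starRingEnd ℂ) (ψ j)

/-- A quantum transport plan between `ρ` and `σ`. -/
structure TPlan (D : ℕ) (ρ σ : Matrix (Fin D) (Fin D) ℂ) where
  n : ℕ
  q : Fin n → ℝ
  ψ : Fin n → QV D
  φ : Fin n → QV D
  q_pos : ∀ j, 0 < q j
  ψ_unit : ∀ j, ‖ψ j‖ = 1
  φ_unit : ∀ j, ‖φ j‖ = 1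
  margL : ∑ j, (q j : ℂ) • qproj (ψ j) = ρ
  margR : ∑ j, (q j : ℂ) • qproj (φ j) = σ

/-- p-th order transport cost of a plan (before the 1/p root). -/
def Tcost {D : ℕ} (d : QV D → QV D → ℝ) (p : ℝ) {ρ σ : Matrix (Fin D) (Fin D) ℂ}
    (Q : TPlan D ρ σ) : ℝ :=
  ∑ j, Q.q j * d (Q.ψ j) (Q.φ j) ^ p

/-- The order-p quantum Wasserstein distance. -/
def Wp {D : ℕ} (d : QV D → QV D → ℝ) (p : ℝ) (ρ σ : Matrix (Fin D) (Fin D) ℂ) : ℝ :=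
  sInf { x | ∃ Q : TPlan D ρ σ, x = (Tcost d p Q) ^ (1/p) }

/-- The infinite-order quantum Wasserstein distance. -/
def Winf {D : ℕ} (d : QV D → QV D → ℝ) (ρ σ : Matrix (Fin D) (Fin D) ℂ) : ℝ :=
  sInf { x | ∃ Q : TPlan D ρ σ, x = ⨆ j, d (Q.ψ j) (Q.φ j) }

def IsDensity {D : ℕ} (ρ : Matrix (Fin D) (Fin D) ℂ) : Prop :=
  ρ.PosSemidef ∧ ρ.trace = 1

/-- Hilbert–Schmidt (Frobenius) norm. -/
def frob {D : ℕ} (A : Matrix (Fin D) (Fin D) ℂ) : ℝ :=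
  Real.sqrt (∑ i, ∑ j, ‖A i j‖ ^ 2)

/-- Action of a matrix on a vector of the Euclidean space. -/
def act {D : ℕ} (U : Matrix (Fin D) (Fin D) ℂ) (ψ : QV D) : QV D :=
  (EuclideanSpace.equiv (Fin D) ℂ).symm (U.mulVec (EuclideanSpace.equiv (Fin D) ℂ ψ))

/-- Dual Lipschitz constant of an observable. -/
def Ld {D : ℕ} (d : QV D → QV D → ℝ) (O : Matrix (Fin D) (Fin D) ℂ) : ℝ :=
  sSup { x | ∃ ρ σ : Matrix (Fin D) (Fin D) ℂ, IsDensity ρ ∧ IsDensity σ ∧ ρ ≠ σ ∧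
    x = ((O * (ρ - σ)).trace).re / Wp d 1 ρ σ }

/-- Double-dual norm. -/
def DWnorm {D : ℕ} (d : QV D → QV D → ℝ) (X : Matrix (Fin D) (Fin D) ℂ) : ℝ :=
  sSup { x | ∃ O : Matrix (Fin D) (Fin D) ℂ, O.IsHermitian ∧ O.trace = 0 ∧ Ld d O ≤ 1 ∧
    x = ((O * X).trace).re }

/-- Trace (nuclear) norm. -/
def traceNorm {D : ℕ} (A : Matrix (Fin D) (Fin D) ℂ) : ℝ :=
  (((Matrix.posSemidef_conjTranspose_mul_self A).1.eigenvectorUnitary : Matrix (Fin D) (Fin D) ℂ) *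
    Matrix.diagonal (((↑) : ℝ → ℂ) ∘ Real.sqrt ∘ (Matrix.posSemidef_conjTranspose_mul_self A).1.eigenvalues) *
    (star ((Matrix.posSemidef_conjTranspose_mul_self A).1.eigenvectorUnitary) : Matrix (Fin D) (Fin D) ℂ)).trace.re

/-! Since `(U - 1)ψ = φ - ψ` and a vector is a one-column matrix, submultiplicativity of the
Hilbert–Schmidt norm gives `‖φ - ψ‖ ≤ ‖U - 1‖₂`, while `‖φ - ψ‖² = 2 - 2 Re⟪ψ, φ⟫ ≥ 2(1 - |⟪ψ, φ⟫|)`.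
Expanding entrywise, `‖|ψ⟩⟨ψ| - |φ⟩⟨φ|‖₂² = 2 - 2|⟪ψ, φ⟫|²`, which is at most `4(1 - |⟪ψ, φ⟫|)`
because `(1 - |⟪ψ, φ⟫|)² ≥ 0`. Hence `‖|ψ⟩⟨ψ| - |φ⟩⟨φ|‖₂ ≤ √2 ‖W - 1‖₂ ≤ 2^{(n+1)/2} d(I, W)` for
every unitary `W` with `Wψ = φ`, and the bound passes to the infimum. -/

open InnerProductSpace

lemma frob_sq {D : ℕ} (A : Matrix (Fin D) (Fin D) ℂ) :
    frob A ^ 2 = ∑ i, ∑ j, ‖A i j‖ ^ 2 :=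
  Real.sq_sqrt (by positivity)

lemma frob_nonneg {D : ℕ} (A : Matrix (Fin D) (Fin D) ℂ) : 0 ≤ frob A :=
  Real.sqrt_nonneg _

lemma act_sub_one {D : ℕ} (W : Matrix (Fin D) (Fin D) ℂ) (ψ : QV D) :
    act (W - 1) ψ = act W ψ - ψ := by
  ext i
  simp [act, sub_mulVec]

section

attribute [local instance] Matrix.frobeniusSeminormedAddCommGroup

lemma frob_eq_frobenius_norm {D : ℕ} (A : Matrix (Fin D) (Fin D) ℂ) : frob A = ‖A‖ := by
  simp only [frob, frobenius_norm_def, Real.sqrt_eq_rpow, Real.rpow_two]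

lemma norm_act_le {D : ℕ} (A : Matrix (Fin D) (Fin D) ℂ) (ψ : QV D) :
    ‖act A ψ‖ ≤ frob A * ‖ψ‖ :=
  calc ‖act A ψ‖ = ‖A * replicateCol (Fin 1) ψ.ofLp‖ := by
        rw [← replicateCol_mulVec]; exact (frobenius_norm_replicateCol _).symm
    _ ≤ ‖A‖ * ‖replicateCol (Fin 1) ψ.ofLp‖ := frobenius_norm_mul _ _
    _ = frob A * ‖ψ‖ := by
        rw [frob_eq_frobenius_norm]; exact congrArg _ (frobenius_norm_replicateCol _)

end

lemma two_mul_one_sub_norm_inner_le_frob_sq {D : ℕ} {ψ φ : QV D} (hψ : ‖ψ‖ = 1) (hφ : ‖φ‖ = 1)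
    {W : Matrix (Fin D) (Fin D) ℂ} (hW : act W ψ = φ) :
    2 * (1 - ‖⟪ψ, φ⟫_ℂ‖) ≤ frob (W - 1) ^ 2 := by
  have hdist : ‖φ - ψ‖ ≤ frob (W - 1) := by
    have h := norm_act_le (W - 1) ψ
    rwa [act_sub_one, hW, hψ, mul_one] at h
  have hexpand : ‖φ - ψ‖ ^ 2 = 2 - 2 * (⟪ψ, φ⟫_ℂ).re := by
    rw [@norm_sub_sq ℂ, hψ, hφ, inner_re_symm]
    simp only [RCLike.re_to_complex]
    ring
  calc 2 * (1 - ‖⟪ψ, φ⟫_ℂ‖) ≤ ‖φ - ψ‖ ^ 2 := by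
        linarith [Complex.re_le_norm ⟪ψ, φ⟫_ℂ]
    _ ≤ frob (W - 1) ^ 2 := by gcongr

lemma frob_qproj_sub_sq {D : ℕ} (ψ φ : QV D) :
    frob (qproj ψ - qproj φ) ^ 2 = ‖ψ‖ ^ 4 + ‖φ‖ ^ 4 - 2 * ‖⟪ψ, φ⟫_ℂ‖ ^ 2 := by
  have hsum : ((frob (qproj ψ - qproj φ) ^ 2 : ℝ) : ℂ) =
      ⟪ψ, ψ⟫_ℂ * ⟪ψ, ψ⟫_ℂ - ⟪ψ, φ⟫_ℂ * ⟪φ, ψ⟫_ℂ - ⟪φ, ψ⟫_ℂ * ⟪ψ, φ⟫_ℂ + ⟪φ, φ⟫_ℂ * ⟪φ, φ⟫_ℂ := by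
    simp only [frob_sq, Complex.ofReal_sum, Complex.ofReal_pow, ← Complex.mul_conj',
      EuclideanSpace.inner_eq_star_dotProduct, dotProduct, Finset.sum_mul_sum,
      ← Finset.sum_sub_distrib, ← Finset.sum_add_distrib]
    refine Finset.sum_congr rfl fun i _ => Finset.sum_congr rfl fun j _ => ?_
    simp only [qproj, Matrix.sub_apply, of_apply, Pi.star_apply, Complex.star_def, map_sub,
      map_mul, Complex.conj_conj]
    ring
  have hcross : ⟪ψ, φ⟫_ℂ * ⟪φ, ψ⟫_ℂ = ‖⟪ψ, φ⟫_ℂ‖ ^ 2 := by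
    rw [← inner_conj_symm φ ψ, Complex.mul_conj']
  have hself (χ : QV D) : ⟪χ, χ⟫_ℂ = (‖χ‖ : ℂ) ^ 2 := inner_self_eq_norm_sq_to_K χ
  apply Complex.ofReal_injective
  rw [hsum, mul_comm ⟪φ, ψ⟫_ℂ, hcross, hself, hself]
  push_cast
  ring

lemma half_frob_qproj_sub_sq_le {D : ℕ} {ψ φ : QV D} (hψ : ‖ψ‖ = 1) (hφ : ‖φ‖ = 1) :
    (1 / 2) * frob (qproj ψ - qproj φ) ^ 2 ≤ 2 * (1 - ‖⟪ψ, φ⟫_ℂ‖) := by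
  rw [frob_qproj_sub_sq, hψ, hφ]
  nlinarith [sq_nonneg (1 - ‖⟪ψ, φ⟫_ℂ‖)]

lemma frob_qproj_sub_le_sqrt_two_mul_frob {D : ℕ} {ψ φ : QV D} (hψ : ‖ψ‖ = 1) (hφ : ‖φ‖ = 1)
    {W : Matrix (Fin D) (Fin D) ℂ} (hW : act W ψ = φ) :
    frob (qproj ψ - qproj φ) ≤ √2 * frob (W - 1) := by
  rw [← pow_le_pow_iff_left₀ (frob_nonneg _) (mul_nonneg (Real.sqrt_nonneg 2) (frob_nonneg _))
    two_ne_zero, mul_pow, Real.sq_sqrt zero_le_two]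
  linarith [half_frob_qproj_sub_sq_le hψ hφ, two_mul_one_sub_norm_inner_le_frob_sq hψ hφ hW]

/-- If `Uψ = φ` then `‖U−I‖₂² ≥ 2(1−|⟨ψ|φ⟩|) ≥ (1/2)‖|ψ⟩⟨ψ|−|φ⟩⟨φ|‖₂²`;
together with `d(I,U) ≥ 2^{-n/2}‖U−I‖₂` this yields
`2^{(n+1)/2}·d_C(ψ,φ) ≥ ‖|ψ⟩⟨ψ|−|φ⟩⟨φ|‖₂`. -/
theorem complexity_state_lower_bound (n : ℕ)
    (dI : Matrix (Fin (2 ^ n)) (Fin (2 ^ n)) ℂ → ℝ)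
    (hdI : ∀ U ∈ Matrix.unitaryGroup (Fin (2 ^ n)) ℂ,
        (2 : ℝ) ^ (-(n : ℝ) / 2) * frob (U - 1) ≤ dI U)
    (ψ φ : QV (2 ^ n)) (hψ : ‖ψ‖ = 1) (hφ : ‖φ‖ = 1)
    (U : Matrix (Fin (2 ^ n)) (Fin (2 ^ n)) ℂ)
    (hU : U ∈ Matrix.unitaryGroup (Fin (2 ^ n)) ℂ) (hUψ : act U ψ = φ) :
    2 * (1 - ‖(inner (𝕜 := ℂ) ψ φ : ℂ)‖) ≤ frob (U - 1) ^ 2 ∧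
    (1 / 2) * frob (qproj ψ - qproj φ) ^ 2 ≤
      2 * (1 - ‖(inner (𝕜 := ℂ) ψ φ : ℂ)‖) ∧
    frob (qproj ψ - qproj φ) ≤ (2 : ℝ) ^ (((n : ℝ) + 1) / 2) *
      sInf { x | ∃ W ∈ Matrix.unitaryGroup (Fin (2 ^ n)) ℂ, act W ψ = φ ∧ x = dI W } := by
  refine ⟨two_mul_one_sub_norm_inner_le_frob_sq hψ hφ hUψ, half_frob_qproj_sub_sq_le hψ hφ, ?_⟩
  have hbound : ∀ W ∈ Matrix.unitaryGroup (Fin (2 ^ n)) ℂ, act W ψ = φ →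
      frob (qproj ψ - qproj φ) ≤ (2 : ℝ) ^ (((n : ℝ) + 1) / 2) * dI W := by
    intro W hW hWψ
    calc frob (qproj ψ - qproj φ) ≤ √2 * frob (W - 1) :=
          frob_qproj_sub_le_sqrt_two_mul_frob hψ hφ hWψ
      _ = (2 : ℝ) ^ (((n : ℝ) + 1) / 2) * ((2 : ℝ) ^ (-(n : ℝ) / 2) * frob (W - 1)) := by
          rw [Real.sqrt_eq_rpow, ← mul_assoc, ← Real.rpow_add two_pos]
          ring_nf
      _ ≤ (2 : ℝ) ^ (((n : ℝ) + 1) / 2) * dI W := by gcongr; exact hdI W hW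
  have hpos : (0 : ℝ) < (2 : ℝ) ^ (((n : ℝ) + 1) / 2) := by positivity
  rw [← div_le_iff₀' hpos]
  refine le_csInf ⟨dI U, U, hU, hUψ, rfl⟩ ?_
  rintro x ⟨W, hW, hWψ, rfl⟩
  exact (div_le_iff₀' hpos).2 (hbound W hW hWψ)
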